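/- Let p ≥ 1 and let Θ be a symmetric p×p real matrix. For j ∈ {1,…,p}, define the group g_j = {(k,l) ∈ {1,…,p}² : k ≤ l and (k = j or l = j)}, and define the upper-triangular matrix Θ△ by (Θ△)_{kl} = Θ_{kl} if k < l, (Θ△)_{kk} = Θ_{kk}/2, and (Θ△)_{kl} = 0 if k > l. Then the overlap norm Ω^O(Θ) = inf { Σ_{j=1}^p ‖V^j‖_F : V^j ∈ ℝ^{p×p}, supp(V^j) ⊆ g_j for each j, and Σ_{j=1}^p V^j = Θ△ } equals the row-column overlap norm with K = 1 and q = 2, namely Ω₂(Θ) = inf { Σ_{j=1}^p ‖A_j‖₂ : A ∈ ℝ^{p×p}, Θ = A + Aᵀ }. -/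
import Mathlib


open Matrix
open scoped BigOperators

/-- The upper-triangular half Θ△ of a matrix Θ: (Θ△)_{kl} = Θ_{kl} for k < l,
Θ_{kk}/2 on the diagonal, and 0 below the diagonal. -/
noncomputable def upperHalf {p : ℕ} (Θ : Matrix (Fin p) (Fin p) ℝ) : Matrix (Fin p) (Fin p) ℝ :=
  Matrix.of fun k l => if k < l then Θ k l else if k = l then Θ k k / 2 else 0

/-- The group g_j of index pairs: entries (k,l) with k ≤ l lying in row j or
column j. -/
def grp {p : ℕ} (j : Fin p) : Set (Fin p × Fin p) :=
  { kl | kl.1 ≤ kl.2 ∧ (kl.1 = j ∨ kl.2 = j) }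

/-- The Frobenius norm of a p×p real matrix. -/
noncomputable def frobNorm {p : ℕ} (M : Matrix (Fin p) (Fin p) ℝ) : ℝ :=
  Real.sqrt (∑ k : Fin p, ∑ l : Fin p, (M k l) ^ 2)

lemma sum_two_aux {p : ℕ} (k l : Fin p) (hkl : k ≠ l) (f : Fin p → ℝ)
    (h0 : ∀ j, j ≠ k → j ≠ l → f j = 0) : ∑ j, f j = f k + f l := by
  rw [← Finset.sum_pair hkl]
  refine (Finset.sum_subset (Finset.subset_univ _) ?_).symm
  intro x _ hx
  simp only [Finset.mem_insert, Finset.mem_singleton, not_or] at hx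
  exact h0 x hx.1 hx.2

lemma sum_one_aux {p : ℕ} (k : Fin p) (f : Fin p → ℝ)
    (h0 : ∀ j, j ≠ k → f j = 0) : ∑ j, f j = f k :=
  Finset.sum_eq_single_of_mem k (Finset.mem_univ k) (fun j _ hj => h0 j hj)

lemma frob_sq_aux {p : ℕ} (j : Fin p) (W : Matrix (Fin p) (Fin p) ℝ)
    (h : ∀ k l, W k l ≠ 0 → k ≤ l ∧ (k = j ∨ l = j)) :
    ∑ k : Fin p, ∑ l : Fin p, (W k l) ^ 2
      = ∑ i : Fin p, (if i ≤ j then W i j else W j i) ^ 2 := by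
  rw [← Finset.sum_product']
  have hfilter : ∑ kl ∈ (Finset.univ ×ˢ Finset.univ).filter
        (fun kl : Fin p × Fin p => kl.1 ≤ kl.2 ∧ (kl.1 = j ∨ kl.2 = j)), W kl.1 kl.2 ^ 2
      = ∑ kl ∈ Finset.univ ×ˢ Finset.univ, W kl.1 kl.2 ^ 2 :=
    Finset.sum_filter_of_ne (fun x _ hx => h x.1 x.2 (fun h0 => hx (by rw [h0]; ring)))
  rw [← hfilter]
  · refine Finset.sum_nbij' (fun kl : Fin p × Fin p => if kl.2 = j then kl.1 else kl.2)
      (fun i : Fin p => if i ≤ j then ((i, j) : Fin p × Fin p) else (j, i)) ?_ ?_ ?_ ?_ ?_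
    · intro kl _; exact Finset.mem_univ _
    · intro i _
      simp only [Finset.mem_filter, Finset.mem_product, Finset.mem_univ, true_and]
      by_cases hi : i ≤ j
      · simp [hi]
      · simp [hi, le_of_not_ge hi]
    · intro kl hkl
      simp only [Finset.mem_filter, Finset.mem_product, Finset.mem_univ, true_and] at hkl
      obtain ⟨h1, h2⟩ := hkl
      by_cases hl : kl.2 = j
      · have hle : kl.1 ≤ j := hl ▸ h1
        simp only [hl, if_pos, hle, if_true]
        exact (Prod.ext rfl hl.symm)
      · have hk : kl.1 = j := h2.resolve_right hl
        have hnle : ¬ kl.2 ≤ j := fun hle => hl (le_antisymm hle (hk ▸ h1))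
        simp only [hl, if_false, hnle]
        exact (Prod.ext hk.symm rfl)
    · intro i _
      by_cases hi : i ≤ j
      · simp [hi]
      · have hne : i ≠ j := fun h => hi (h ▸ le_refl j)
        simp [hi, hne]
    · intro kl hkl
      simp only [Finset.mem_filter, Finset.mem_product, Finset.mem_univ, true_and] at hkl
      obtain ⟨h1, h2⟩ := hkl
      by_cases hl : kl.2 = j
      · have hle : kl.1 ≤ j := hl ▸ h1
        simp [hl, hle]
      · have hk : kl.1 = j := h2.resolve_right hl
        have hnle : ¬ kl.2 ≤ j := fun hle => hl (le_antisymm hle (hk ▸ h1))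
        simp [hl, hnle, hk]

/-- Appendix E: for a symmetric p×p matrix Θ, the overlap norm
Ω^O(Θ) = inf { Σ_j ‖V^j‖_F : supp(V^j) ⊆ g_j, Σ_j V^j = Θ△ } equals the
row-column overlap norm with K = 1 and q = 2,
Ω₂(Θ) = inf { Σ_j ‖A_j‖₂ : Θ = A + Aᵀ }. -/
theorem overlap_norm_eq_rcon_two (p : ℕ) (hp : 1 ≤ p)
    (Θ : Matrix (Fin p) (Fin p) ℝ) (hΘ : Θ.IsSymm) :
    sInf { r : ℝ | ∃ V : Fin p → Matrix (Fin p) (Fin p) ℝ,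
        (∀ j, ∀ k l : Fin p, V j k l ≠ 0 → (k, l) ∈ grp j) ∧
        (∑ j : Fin p, V j) = upperHalf Θ ∧
        r = ∑ j : Fin p, frobNorm (V j) }
      = sInf { r : ℝ | ∃ A : Matrix (Fin p) (Fin p) ℝ,
          Θ = A + Aᵀ ∧
          r = ∑ j : Fin p, Real.sqrt (∑ i : Fin p, (A i j) ^ 2) } := by
  have hΘ' : ∀ a b : Fin p, Θ b a = Θ a b := by
    intro a b
    have := congrFun (congrFun hΘ a) b
    simpa [Matrix.transpose_apply] using this
  congr 1
  ext r
  simp only [Set.mem_setOf_eq]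
  constructor
  · rintro ⟨V, hsupp, hsum, rfl⟩
    have hsum' : ∀ k l : Fin p, ∑ j, V j k l = upperHalf Θ k l := by
      intro k l
      have := congrFun (congrFun hsum k) l
      simpa [Matrix.sum_apply] using this
    have hsuppV : ∀ j k l : Fin p, V j k l ≠ 0 → k ≤ l ∧ (k = j ∨ l = j) :=
      fun j k l h => hsupp j k l h
    have hzero : ∀ j a b : Fin p, j ≠ a → j ≠ b → V j a b = 0 := by
      intro j a b ha hb
      by_contra hne
      rcases (hsuppV j a b hne).2 with h | h
      · exact ha h.symm
      · exact hb h.symm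
    refine ⟨Matrix.of fun i j => if i ≤ j then V j i j else V j j i, ?_, ?_⟩
    · ext k l
      simp only [Matrix.add_apply, Matrix.transpose_apply, Matrix.of_apply]
      rcases lt_trichotomy k l with hkl | hkl | hkl
      · have h1 : k ≤ l := le_of_lt hkl
        have h2 : ¬ l ≤ k := not_le_of_gt hkl
        have hne : k ≠ l := ne_of_lt hkl
        have hs := hsum' k l
        rw [sum_two_aux k l hne _ (fun j hjk hjl => hzero j k l hjk hjl)] at hs
        simp only [upperHalf, Matrix.of_apply, hkl, if_pos] at hs
        simp only [h1, if_pos, h2, if_neg, if_false]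
        linarith
      · subst hkl
        have hs := hsum' k k
        rw [sum_one_aux k _ (fun j hj => hzero j k k hj hj)] at hs
        simp only [upperHalf, Matrix.of_apply, lt_irrefl, if_false, if_pos, if_true] at hs
        simp only [le_refl, if_pos]
        linarith
      · have h1 : ¬ k ≤ l := not_le_of_gt hkl
        have h2 : l ≤ k := le_of_lt hkl
        have hne : l ≠ k := ne_of_lt hkl
        have hs := hsum' l k
        rw [sum_two_aux l k hne _ (fun j hjl hjk => hzero j l k hjl hjk)] at hs
        simp only [upperHalf, Matrix.of_apply, hkl, if_pos] at hs
        simp only [h1, if_neg, h2, if_pos, if_false]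
        rw [hΘ' k l] at hs
        linarith
    · refine Finset.sum_congr rfl (fun j _ => ?_)
      unfold frobNorm
      congr 1
      rw [frob_sq_aux j (V j) (hsuppV j)]
      refine Finset.sum_congr rfl (fun i _ => ?_)
      simp only [Matrix.of_apply]
  · rintro ⟨A, hA, rfl⟩
    have hA' : ∀ a b : Fin p, Θ a b = A a b + A b a := by
      intro a b
      have := congrFun (congrFun hA a) b
      simpa [Matrix.add_apply, Matrix.transpose_apply] using this
    set V : Fin p → Matrix (Fin p) (Fin p) ℝ := fun j =>
      Matrix.of fun k l => if k ≤ l ∧ l = j then A k j else if k ≤ l ∧ k = j then A l j else 0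
      with hV
    have hsuppV : ∀ j k l : Fin p, V j k l ≠ 0 → k ≤ l ∧ (k = j ∨ l = j) := by
      intro j k l h
      simp only [hV, Matrix.of_apply] at h
      by_cases h1 : k ≤ l ∧ l = j
      · exact ⟨h1.1, Or.inr h1.2⟩
      · by_cases h2 : k ≤ l ∧ k = j
        · exact ⟨h2.1, Or.inl h2.2⟩
        · simp [h1, h2] at h
    refine ⟨V, fun j k l h => hsuppV j k l h, ?_, ?_⟩
    · ext k l
      rw [Matrix.sum_apply]
      simp only [hV, Matrix.of_apply, upperHalf]
      rcases lt_trichotomy k l with hkl | hkl | hkl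
      · have h1 : k ≤ l := le_of_lt hkl
        have hne : l ≠ k := (ne_of_lt hkl).symm
        rw [sum_two_aux l k hne]
        · rw [if_pos (⟨h1, rfl⟩ : k ≤ l ∧ l = l),
            if_neg (fun hc : k ≤ l ∧ l = k => hne hc.2),
            if_pos (⟨h1, rfl⟩ : k ≤ l ∧ k = k), if_pos hkl]
          linarith [hA' k l]
        · intro j hjl hjk
          have c1 : ¬ (k ≤ l ∧ l = j) := fun hc => hjl hc.2.symm
          have c2 : ¬ (k ≤ l ∧ k = j) := fun hc => hjk hc.2.symm
          simp [c1, c2]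
      · subst hkl
        rw [sum_one_aux k]
        · rw [if_pos (⟨le_refl k, rfl⟩ : k ≤ k ∧ k = k), if_neg (lt_irrefl k), if_pos rfl]
          linarith [hA' k k]
        · intro j hj
          have c1 : ¬ (k ≤ k ∧ k = j) := fun hc => hj hc.2.symm
          rw [if_neg c1, if_neg c1]
      · have h1 : ¬ k ≤ l := not_le_of_gt hkl
        have hns : ¬ k < l := not_lt_of_gt hkl
        have hne : ¬ k = l := fun hc => (ne_of_lt hkl).symm hc
        rw [Finset.sum_eq_zero]
        · simp [hns, hne]
        · intro j _
          have c1 : ¬ (k ≤ l ∧ l = j) := fun hc => h1 hc.1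
          have c2 : ¬ (k ≤ l ∧ k = j) := fun hc => h1 hc.1
          simp [c1, c2]
    · refine Finset.sum_congr rfl (fun j _ => ?_)
      unfold frobNorm
      congr 1
      rw [frob_sq_aux j (V j) (hsuppV j)]
      refine Finset.sum_congr rfl (fun i _ => ?_)
      by_cases hi : i ≤ j
      · simp [hV, Matrix.of_apply, hi]
      · have hji : j ≤ i := le_of_not_ge hi
        have hne : ¬ i = j := fun hc => hi (hc ▸ le_refl j)
        simp [hV, Matrix.of_apply, hi, hji, hne]
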